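/- Define the differential operator D₁ acting on smooth functions f : ℝ → ℝ by D₁ f := −h'' + h where h := (g' + tanh·g) and g := (f' + tanh·f), i.e. D₁ = (−d²/dx² + 1)∘(d/dx + tanh(x))∘(d/dx + tanh(x)). Then for all x ∈ ℝ, D₁( sech − 6 sech³ + 6 sech⁵ )(x) = 192 sech³(x) − 3456 sech⁵(x) + 9720 sech⁷(x) − 6720 sech⁹(x). -/

import Mathlib

open Real

noncomputable def sech (x : ℝ) : ℝ := (Real.cosh x)⁻¹

/-- The operator `S = d/dx + tanh(x)`. -/
noncomputable def Sop (f : ℝ → ℝ) : ℝ → ℝ := fun x => deriv f x + Real.tanh x * f x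

/-- The operator `D₁ = (−d²/dx² + 1) ∘ S ∘ S`. -/
noncomputable def D1 (f : ℝ → ℝ) : ℝ → ℝ :=
  fun x => -deriv (deriv (Sop (Sop f))) x + Sop (Sop f) x

/-!
Since `sech' = -tanh · sech` and `tanh' = sech² = 1 - tanh²`, both `d/dx` and `S` exchange the
functions `p(sech)` and `tanh · q(sech)` (`p, q` real polynomials), acting on the polynomials by
explicit first-order operators. Hence `D₁ (p(sech)) = (D1Poly p)(sech)`, and the identity becomes a
computation with the polynomial `X - 6X³ + 6X⁵`.
-/

open Polynomial

theorem tanh_sq_add_sech_sq (x : ℝ) : tanh x ^ 2 + sech x ^ 2 = 1 := by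
  rw [tanh_eq_sinh_div_cosh, sech]
  field_simp
  linarith [cosh_sq_sub_sinh_sq x]

theorem hasDerivAt_sech (x : ℝ) : HasDerivAt sech (-(tanh x * sech x)) x := by
  refine ((hasDerivAt_cosh x).inv (cosh_pos x).ne').congr_deriv ?_
  rw [tanh_eq_sinh_div_cosh, sech]
  field_simp

theorem hasDerivAt_tanh (x : ℝ) : HasDerivAt tanh (sech x ^ 2) x := by
  have h := (hasDerivAt_sinh x).div (hasDerivAt_cosh x) (cosh_pos x).ne'
  rw [show sinh / cosh = tanh from funext fun y => (tanh_eq_sinh_div_cosh y).symm] at h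
  refine h.congr_deriv ?_
  rw [sech, inv_pow, ← one_div, ← cosh_sq_sub_sinh_sq x]
  ring

noncomputable def sechDeriv (p : ℝ[X]) : ℝ[X] := -(X * derivative p)

noncomputable def tanhSechDeriv (q : ℝ[X]) : ℝ[X] := X ^ 2 * q + (X ^ 2 - 1) * X * derivative q

noncomputable def D1Poly (p : ℝ[X]) : ℝ[X] :=
  let r := tanhSechDeriv (p + sechDeriv p) + (1 - X ^ 2) * (p + sechDeriv p)
  r - tanhSechDeriv (sechDeriv r)

theorem hasDerivAt_eval_sech (p : ℝ[X]) (x : ℝ) :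
    HasDerivAt (fun y => p.eval (sech y)) (tanh x * (sechDeriv p).eval (sech x)) x := by
  refine ((p.hasDerivAt (sech x)).comp x (hasDerivAt_sech x)).congr_deriv ?_
  simp only [sechDeriv, eval_neg, eval_mul, eval_X]
  ring

theorem hasDerivAt_tanh_mul_eval_sech (q : ℝ[X]) (x : ℝ) :
    HasDerivAt (fun y => tanh y * q.eval (sech y)) ((tanhSechDeriv q).eval (sech x)) x := by
  refine ((hasDerivAt_tanh x).mul (hasDerivAt_eval_sech q x)).congr_deriv ?_
  simp only [tanhSechDeriv, sechDeriv, eval_add, eval_sub, eval_neg, eval_mul, eval_pow, eval_X,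
    eval_one]
  linear_combination (-(sech x * (derivative q).eval (sech x))) * tanh_sq_add_sech_sq x

theorem deriv_eval_sech (p : ℝ[X]) :
    deriv (fun y => p.eval (sech y)) = fun y => tanh y * (sechDeriv p).eval (sech y) :=
  funext fun x => (hasDerivAt_eval_sech p x).deriv

theorem Sop_eval_sech (p : ℝ[X]) :
    Sop (fun y => p.eval (sech y)) = fun y => tanh y * (p + sechDeriv p).eval (sech y) := by
  funext x
  simp only [Sop, deriv_eval_sech, eval_add]
  ring

theorem Sop_tanh_mul_eval_sech (q : ℝ[X]) :
    Sop (fun y => tanh y * q.eval (sech y))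
      = fun y => (tanhSechDeriv q + (1 - X ^ 2) * q).eval (sech y) := by
  funext x
  simp only [Sop, (hasDerivAt_tanh_mul_eval_sech q x).deriv, eval_add, eval_mul, eval_sub,
    eval_one, eval_pow, eval_X]
  linear_combination q.eval (sech x) * tanh_sq_add_sech_sq x

theorem D1_eval_sech (p : ℝ[X]) :
    D1 (fun y => p.eval (sech y)) = fun y => (D1Poly p).eval (sech y) := by
  funext x
  simp only [D1, D1Poly, Sop_eval_sech, Sop_tanh_mul_eval_sech, deriv_eval_sech,
    (hasDerivAt_tanh_mul_eval_sech _ x).deriv, eval_sub]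
  ring

/-- Identity (1.47) in the proof of Lemma 1.6:
`D₁(sech − 6 sech³ + 6 sech⁵) = 192 sech³ − 3456 sech⁵ + 9720 sech⁷ − 6720 sech⁹`. -/
theorem D1_identity :
    ∀ x : ℝ,
      D1 (fun y => sech y - 6 * sech y ^ 3 + 6 * sech y ^ 5) x
        = 192 * sech x ^ 3 - 3456 * sech x ^ 5 + 9720 * sech x ^ 7 - 6720 * sech x ^ 9 := by
  intro x
  have hpoly : D1Poly (X - 6 * X ^ 3 + 6 * X ^ 5)
      = 192 * X ^ 3 - 3456 * X ^ 5 + 9720 * X ^ 7 - 6720 * X ^ 9 := by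
    simp only [D1Poly, tanhSechDeriv, sechDeriv, derivative_sub, derivative_X, derivative_mul,
      derivative_ofNat, derivative_X_pow_succ, derivative_neg, derivative_one, derivative_zero,
      Nat.cast_ofNat, Nat.cast_one, map_add, map_one, C_ofNat, pow_one, zero_mul, zero_add,
      add_zero, sub_zero, mul_zero]
    ring
  have h := congrFun (D1_eval_sech (X - 6 * X ^ 3 + 6 * X ^ 5)) x
  simpa only [hpoly, eval_add, eval_sub, eval_mul, eval_pow, eval_X, eval_ofNat] using h
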